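/- arXiv:2206.10497 — 3 statements merged into one kernel-verified Lean document; each statement's English description precedes it below -/
import Mathlib

section
/- Let X and Y be normed linear spaces, K₁ ⊂ X and K₂ ⊂ Y cones, K := K₁ × K₂, and r = (r₁,r₂), R = (R₁,R₂) with 0 < rᵢ < Rᵢ (i = 1,2). Given a fixed h ∈ K∖{0} with h = (h₁,h₂), hᵢ ∈ Kᵢ∖{0}, for each i the map ρᵢ : {u ∈ Kᵢ : ‖u‖ ≤ Rᵢ} → {u ∈ Kᵢ : rᵢ ≤ ‖u‖ ≤ Rᵢ} defined by ρᵢ(uᵢ) = rᵢ · (uᵢ + (rᵢ − ‖uᵢ‖)² hᵢ)/‖uᵢ + (rᵢ − ‖uᵢ‖)² hᵢ‖ if ‖uᵢ‖ < rᵢ, and ρᵢ(uᵢ) = uᵢ if rᵢ ≤ ‖uᵢ‖ ≤ Rᵢ, is a well-defined retraction; that is: (1) ‖uᵢ + (rᵢ − ‖uᵢ‖)² hᵢ‖ ≠ 0 for every uᵢ ∈ Kᵢ with ‖uᵢ‖ < rᵢ; (2) ρᵢ is continuous; (3) ρᵢ maps {u ∈ Kᵢ : ‖u‖ ≤ Rᵢ}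 into {u ∈ Kᵢ : rᵢ ≤ ‖u‖ ≤ Rᵢ}; (4) ρᵢ(uᵢ) = uᵢ for all uᵢ with rᵢ ≤ ‖uᵢ‖ ≤ Rᵢ. -/
theorem radial_aux {X : Type*} [NormedAddCommGroup X] [NormedSpace ℝ X]
    (K : Set X) (hK_convex : Convex ℝ K)
    (hK_smul : ∀ u ∈ K, ∀ l : ℝ, 0 ≤ l → l • u ∈ K)
    (hK_pointed : K ∩ (-K) = {0})
    (r R : ℝ) (hr : 0 < r) (hrR : r < R)
    (h : X) (hh : h ∈ K \ {0})
    (ρ : X → X)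
    (hρ : ∀ u : X, ρ u = if ‖u‖ < r then
        r • ‖u + (r - ‖u‖) ^ 2 • h‖⁻¹ • (u + (r - ‖u‖) ^ 2 • h) else u) :
    (∀ u ∈ K, ‖u‖ < r → ‖u + (r - ‖u‖) ^ 2 • h‖ ≠ 0) ∧
    ContinuousOn ρ {u ∈ K | ‖u‖ ≤ R} ∧
    Set.MapsTo ρ {u ∈ K | ‖u‖ ≤ R} {u ∈ K | r ≤ ‖u‖ ∧ ‖u‖ ≤ R} ∧
    (∀ u ∈ K, r ≤ ‖u‖ → ‖u‖ ≤ R → ρ u = u) := by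
  -- addition closure in the cone
  have hadd : ∀ u ∈ K, ∀ w ∈ K, u + w ∈ K := by
    intro u hu w hw
    have h2 := hK_convex hu hw (by norm_num : (0:ℝ) ≤ 1/2) (by norm_num : (0:ℝ) ≤ 1/2)
      (by norm_num)
    have := hK_smul _ h2 2 (by norm_num)
    convert this using 1
    module
  -- the key nonvanishing fact on all of K
  have hvne : ∀ u ∈ K, u + (r - ‖u‖) ^ 2 • h ≠ 0 := by
    intro u hu hv
    have hc : (0:ℝ) ≤ (r - ‖u‖) ^ 2 := sq_nonneg _
    have hu0 : u = 0 := by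
      have hneg : -u ∈ K := by
        have : (r - ‖u‖) ^ 2 • h ∈ K := hK_smul _ hh.1 _ hc
        have : -u = (r - ‖u‖) ^ 2 • h := by
          rw [neg_eq_iff_add_eq_zero]; exact hv
        rw [this]; exact hK_smul _ hh.1 _ hc
      have : u ∈ K ∩ (-K) := ⟨hu, by simpa [Set.mem_neg] using hneg⟩
      rw [hK_pointed] at this
      simpa using this
    rw [hu0] at hv
    simp only [norm_zero, sub_zero, zero_add] at hv
    have hr2 : (r:ℝ) ^ 2 ≠ 0 := pow_ne_zero _ (ne_of_gt hr)
    have : h = 0 := by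
      have := smul_eq_zero.mp hv
      tauto
    exact hh.2 this
  have hvnorm : ∀ u ∈ K, ‖u + (r - ‖u‖) ^ 2 • h‖ ≠ 0 := fun u hu =>
    norm_ne_zero_iff.mpr (hvne u hu)
  -- membership of v in K
  have hvK : ∀ u ∈ K, u + (r - ‖u‖) ^ 2 • h ∈ K := fun u hu =>
    hadd u hu _ (hK_smul _ hh.1 _ (sq_nonneg _))
  set S : Set X := {u ∈ K | ‖u‖ ≤ R} with hS
  have hSK : S ⊆ K := fun u hu => hu.1
  refine ⟨fun u hu _ => hvnorm u hu, ?_, ?_, ?_⟩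
  · -- continuity
    have hvcont : Continuous fun u : X => u + (r - ‖u‖) ^ 2 • h :=
      continuous_id.add (((continuous_const.sub continuous_norm).pow 2).smul continuous_const)
    have hfcont : ContinuousOn
        (fun u : X => r • ‖u + (r - ‖u‖) ^ 2 • h‖⁻¹ • (u + (r - ‖u‖) ^ 2 • h)) S := by
      apply ContinuousOn.smul continuousOn_const
      exact ((hvcont.norm.continuousOn.inv₀ fun u hu => hvnorm u (hSK hu)).smul
        hvcont.continuousOn)
    have hif : ContinuousOn
        (fun u : X => if ‖u‖ < r then
          r • ‖u + (r - ‖u‖) ^ 2 • h‖⁻¹ • (u + (r - ‖u‖) ^ 2 • h) else u) S := by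
      apply ContinuousOn.if
      · intro a ha
        have hfr : ‖a‖ = r := by
          have := frontier_lt_subset_eq continuous_norm continuous_const ha.2
          exact this
        have hveq : a + (r - ‖a‖) ^ 2 • h = a := by
          rw [hfr]; simp
        rw [hveq, hfr, smul_smul, mul_inv_cancel₀ (ne_of_gt hr), one_smul]
      · exact hfcont.mono (Set.inter_subset_left)
      · exact continuousOn_id.mono (Set.inter_subset_left)
    exact hif.congr fun u _ => hρ u
  · -- maps to
    intro u hu
    rcases lt_or_ge ‖u‖ r with hlt | hle
    · rw [hρ u, if_pos hlt]
      set v := u + (r - ‖u‖) ^ 2 • h with hv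
      have hvK' : v ∈ K := hvK u hu.1
      have hvn : ‖v‖ ≠ 0 := hvnorm u hu.1
      constructor
      · exact hK_smul _ (hK_smul _ hvK' _ (inv_nonneg.mpr (norm_nonneg _))) _ (le_of_lt hr)
      · have : ‖r • ‖v‖⁻¹ • v‖ = r := by
          rw [norm_smul, norm_smul, Real.norm_eq_abs, Real.norm_eq_abs,
            abs_of_pos hr, abs_of_nonneg (inv_nonneg.mpr (norm_nonneg _))]
          field_simp
        rw [this]
        exact ⟨le_refl r, le_of_lt hrR⟩
    · rw [hρ u, if_neg (not_lt.mpr hle)]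
      exact ⟨hu.1, hle, hu.2⟩
  · intro u _ hle _
    rw [hρ u, if_neg (not_lt.mpr hle)]



/-- **The radial retraction onto a conical annulus is a well-defined retraction.**
For cones `K₁ ⊂ X`, `K₂ ⊂ Y`, `0 < rᵢ < Rᵢ`, and fixed `hᵢ ∈ Kᵢ \ {0}`, each map
`ρᵢ(u) = rᵢ (u + (rᵢ−‖u‖)² hᵢ)/‖u + (rᵢ−‖u‖)² hᵢ‖` for `‖u‖ < rᵢ`, `ρᵢ(u) = u`
otherwise, is a well-defined retraction of `{u ∈ Kᵢ : ‖u‖ ≤ Rᵢ}` onto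
`{u ∈ Kᵢ : rᵢ ≤ ‖u‖ ≤ Rᵢ}`: the denominator never vanishes, `ρᵢ` is continuous,
maps into the annulus, and fixes the annulus pointwise. -/
theorem stmt_4 {X Y : Type*} [NormedAddCommGroup X] [NormedSpace ℝ X]
    [NormedAddCommGroup Y] [NormedSpace ℝ Y]
    (K₁ : Set X) (K₂ : Set Y)
    (hK₁_closed : IsClosed K₁) (hK₁_convex : Convex ℝ K₁)
    (hK₁_smul : ∀ u ∈ K₁, ∀ l : ℝ, 0 ≤ l → l • u ∈ K₁)
    (hK₁_pointed : K₁ ∩ (-K₁) = {0})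
    (hK₂_closed : IsClosed K₂) (hK₂_convex : Convex ℝ K₂)
    (hK₂_smul : ∀ u ∈ K₂, ∀ l : ℝ, 0 ≤ l → l • u ∈ K₂)
    (hK₂_pointed : K₂ ∩ (-K₂) = {0})
    (r₁ r₂ R₁ R₂ : ℝ) (hr₁ : 0 < r₁) (hrR₁ : r₁ < R₁) (hr₂ : 0 < r₂) (hrR₂ : r₂ < R₂)
    (h₁ : X) (h₂ : Y) (hh₁ : h₁ ∈ K₁ \ {0}) (hh₂ : h₂ ∈ K₂ \ {0})
    (ρ₁ : X → X)
    (hρ₁ : ∀ u : X, ρ₁ u =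
      if ‖u‖ < r₁ then
        r₁ • ‖u + (r₁ - ‖u‖) ^ 2 • h₁‖⁻¹ • (u + (r₁ - ‖u‖) ^ 2 • h₁)
      else u)
    (ρ₂ : Y → Y)
    (hρ₂ : ∀ u : Y, ρ₂ u =
      if ‖u‖ < r₂ then
        r₂ • ‖u + (r₂ - ‖u‖) ^ 2 • h₂‖⁻¹ • (u + (r₂ - ‖u‖) ^ 2 • h₂)
      else u) :
    ((∀ u ∈ K₁, ‖u‖ < r₁ → ‖u + (r₁ - ‖u‖) ^ 2 • h₁‖ ≠ 0) ∧
     ContinuousOn ρ₁ {u ∈ K₁ | ‖u‖ ≤ R₁} ∧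
     Set.MapsTo ρ₁ {u ∈ K₁ | ‖u‖ ≤ R₁} {u ∈ K₁ | r₁ ≤ ‖u‖ ∧ ‖u‖ ≤ R₁} ∧
     (∀ u ∈ K₁, r₁ ≤ ‖u‖ → ‖u‖ ≤ R₁ → ρ₁ u = u)) ∧
    ((∀ u ∈ K₂, ‖u‖ < r₂ → ‖u + (r₂ - ‖u‖) ^ 2 • h₂‖ ≠ 0) ∧
     ContinuousOn ρ₂ {u ∈ K₂ | ‖u‖ ≤ R₂} ∧
     Set.MapsTo ρ₂ {u ∈ K₂ | ‖u‖ ≤ R₂} {u ∈ K₂ | r₂ ≤ ‖u‖ ∧ ‖u‖ ≤ R₂} ∧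
     (∀ u ∈ K₂, r₂ ≤ ‖u‖ → ‖u‖ ≤ R₂ → ρ₂ u = u)) := by
  exact ⟨radial_aux K₁ hK₁_convex hK₁_smul hK₁_pointed r₁ R₁ hr₁ hrR₁ h₁ hh₁ ρ₁ hρ₁,
    radial_aux K₂ hK₂_convex hK₂_smul hK₂_pointed r₂ R₂ hr₂ hrR₂ h₂ hh₂ ρ₂ hρ₂⟩
end

section
/- Let n ≥ 2 be an integer, p₁, p₂ > n, [a,b] ⊂ (0,1), cᵢ := ((pᵢ−n)/(pᵢ−1))(1−b)a^{n/(pᵢ−1)}, and let Kᵢ := {v ∈ C([0,1]) : v ≥ 0 on [0,1], v nonincreasing on [0,1], and min_{r∈[a,b]} v(r) ≥ cᵢ‖v‖_∞} (i = 1,2), K := K₁ × K₂. Let f₁, f₂ : ℝ₊² → ℝ₊ be continuous and nondecreasing (fᵢ(u₁,v₁) ≤ fᵢ(u₂,v₂) whenever u₁ ≤ u₂ and v₁ ≤ v₂). Then the operator T = (T₁,T₂) defined by Tᵢ(u₁,u₂)(r) = ∫ᵣ¹ φ_{pᵢ}^{−1}( s^{1−n} ∫₀ˢ τ^{n−1}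 fᵢ(u₁(τ),u₂(τ)) dτ ) ds maps K into K; that is, for every (u₁,u₂) ∈ K and i = 1,2, the function Tᵢ(u₁,u₂) is continuous, nonnegative, nonincreasing on [0,1], and satisfies min_{r∈[a,b]} Tᵢ(u₁,u₂)(r) ≥ cᵢ‖Tᵢ(u₁,u₂)‖_∞. -/
/-!
With `h = f(u₁,u₂)` nonnegative and nonincreasing and `A(s) = s^{1-n} ∫₀ˢ τ^{n-1} h`, the operator
is `T r = ∫ᵣ¹ A^{1/(p-1)}`, so it is continuous, nonnegative and nonincreasing, and `‖T‖_∞ = T 0`.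
With `M = ∫₀¹ τ^{n-1} h`, the bound `A(s) ≤ s^{1-n} M` gives `T 0 ≤ (p-1)/(p-n) M^{1/(p-1)}`,
the singularity being integrable because `p > n`. Since `h` is nonincreasing, its average against
`τ^{n-1}` over `[0,a]` dominates the one over `[0,1]`, i.e. `∫₀ᵃ τ^{n-1} h ≥ aⁿ M`; hence
`A ≥ aⁿ M` on `[a,1]` and `T b ≥ (1-b)(aⁿ M)^{1/(p-1)}`. Combining, `T r ≥ T b ≥ c T 0` on `[a,b]`.
-/

open Set

/-- The inverse of the `p`-Laplacian homeomorphism `φ_p(t) = |t|^{p-2} t`,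
namely `φ_p⁻¹(s) = sign(s) |s|^{1/(p-1)}`. -/
noncomputable def pLapInv (p s : ℝ) : ℝ := Real.sign s * |s| ^ (1 / (p - 1))

/-- The fixed point operator associated with the radial `p`-Laplacian system:
`T(u₁,u₂)(r) = ∫ᵣ¹ φ_p⁻¹( s^{1-n} ∫₀ˢ τ^{n-1} f(u₁(τ),u₂(τ)) dτ ) ds`. -/
noncomputable def radialT (n : ℕ) (p : ℝ) (f : ℝ → ℝ → ℝ) (u₁ u₂ : ℝ → ℝ)
    (r : ℝ) : ℝ :=
  ∫ s in r..1,
    pLapInv p ((1 / s ^ (n - 1)) * ∫ τ in (0:ℝ)..s, τ ^ (n - 1) * f (u₁ τ) (u₂ τ))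

open MeasureTheory intervalIntegral

lemma pLapInv_of_nonneg {p x : ℝ} (hp : 1 < p) (hx : 0 ≤ x) :
    pLapInv p x = x ^ (1 / (p - 1)) := by
  rcases hx.lt_or_eq with h | h
  · rw [pLapInv, Real.sign_of_pos h, abs_of_pos h, one_mul]
  · rw [← h, pLapInv, Real.sign_zero, zero_mul,
      Real.zero_rpow (one_div_pos.mpr (by linarith)).ne']

noncomputable def radialMean (m : ℕ) (h : ℝ → ℝ) (s : ℝ) : ℝ :=
  (1 / s ^ m) * ∫ τ in (0:ℝ)..s, τ ^ m * h τ

def harnackCone (a b c : ℝ) : Set (ℝ → ℝ) :=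
  {v | ContinuousOn v (Icc 0 1) ∧ (∀ r ∈ Icc (0:ℝ) 1, 0 ≤ v r) ∧ AntitoneOn v (Icc 0 1) ∧
    ∀ r ∈ Icc a b, c * sSup ((fun s => |v s|) '' Icc (0:ℝ) 1) ≤ v r}

section RadialMean

variable {m : ℕ} {h : ℝ → ℝ}

lemma intervalIntegrable_pow_mul_of_antitoneOn (hanti : AntitoneOn h (Icc 0 1)) {s t : ℝ}
    (hs : s ∈ Icc (0:ℝ) 1) (ht : t ∈ Icc (0:ℝ) 1) :
    IntervalIntegrable (fun τ => τ ^ m * h τ) volume s t :=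
  (hanti.mono (uIcc_subset_Icc hs ht)).intervalIntegrable.continuousOn_mul
    (continuous_pow m).continuousOn

lemma integral_pow_mul_nonneg (hh : ∀ t ∈ Icc (0:ℝ) 1, 0 ≤ h t) {s : ℝ}
    (hs : s ∈ Icc (0:ℝ) 1) : 0 ≤ ∫ τ in (0:ℝ)..s, τ ^ m * h τ :=
  integral_nonneg hs.1 fun τ hτ => mul_nonneg (pow_nonneg hτ.1 m) (hh τ ⟨hτ.1, hτ.2.trans hs.2⟩)

lemma integral_pow_mul_mono (hh : ∀ t ∈ Icc (0:ℝ) 1, 0 ≤ h t)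
    (hanti : AntitoneOn h (Icc 0 1)) {s t : ℝ} (hs : 0 ≤ s) (hst : s ≤ t) (ht : t ≤ 1) :
    ∫ τ in (0:ℝ)..s, τ ^ m * h τ ≤ ∫ τ in (0:ℝ)..t, τ ^ m * h τ :=
  integral_mono_interval le_rfl hs hst
    (ae_restrict_of_forall_mem measurableSet_Ioc fun τ hτ =>
      mul_nonneg (pow_nonneg hτ.1.le m) (hh τ ⟨hτ.1.le, hτ.2.trans ht⟩))
    (intervalIntegrable_pow_mul_of_antitoneOn hanti ⟨le_rfl, zero_le_one⟩
      ⟨hs.trans hst, ht⟩)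

lemma pow_succ_mul_integral_le_integral (hanti : AntitoneOn h (Icc 0 1)) {a : ℝ}
    (ha : a ∈ Icc (0:ℝ) 1) :
    a ^ (m + 1) * ∫ τ in (0:ℝ)..1, τ ^ m * h τ ≤ ∫ τ in (0:ℝ)..a, τ ^ m * h τ := by
  have h0 : (0:ℝ) ∈ Icc (0:ℝ) 1 := ⟨le_rfl, zero_le_one⟩
  have h1 : (1:ℝ) ∈ Icc (0:ℝ) 1 := ⟨zero_le_one, le_rfl⟩
  have hweight : ∀ x y : ℝ, x ∈ Icc (0:ℝ) 1 → y ∈ Icc (0:ℝ) 1 →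
      IntervalIntegrable (fun τ => τ ^ m * h a) volume x y := fun _ _ _ _ =>
    (continuous_pow m).intervalIntegrable _ _ |>.mul_const _
  have hW : ∀ x y : ℝ, ∫ τ in x..y, τ ^ m * h a = h a * ((y ^ (m + 1) - x ^ (m + 1)) / (m + 1)) :=
    fun x y => by rw [intervalIntegral.integral_mul_const, integral_pow]; ring
  have lower : h a * (a ^ (m + 1) / (m + 1)) ≤ ∫ τ in (0:ℝ)..a, τ ^ m * h τ := by
    have := integral_mono_on ha.1 (hweight 0 a h0 ha)
      (intervalIntegrable_pow_mul_of_antitoneOn hanti h0 ha) fun τ hτ =>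
        mul_le_mul_of_nonneg_left (hanti ⟨hτ.1, hτ.2.trans ha.2⟩ ha hτ.2) (pow_nonneg hτ.1 m)
    rwa [hW, zero_pow m.succ_ne_zero, sub_zero] at this
  have upper : ∫ τ in a..1, τ ^ m * h τ ≤ h a * ((1 - a ^ (m + 1)) / (m + 1)) := by
    have := integral_mono_on ha.2 (intervalIntegrable_pow_mul_of_antitoneOn hanti ha h1)
      (hweight a 1 ha h1) fun τ hτ =>
        mul_le_mul_of_nonneg_left (hanti ha ⟨ha.1.trans hτ.1, hτ.2⟩ hτ.1)
          (pow_nonneg (ha.1.trans hτ.1) m)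
    rwa [hW, one_pow] at this
  have hsplit := integral_add_adjacent_intervals
    (intervalIntegrable_pow_mul_of_antitoneOn (m := m) hanti h0 ha)
    (intervalIntegrable_pow_mul_of_antitoneOn hanti ha h1)
  have hpow : a ^ (m + 1) ≤ 1 := pow_le_one₀ ha.1 ha.2
  have k1 := mul_le_mul_of_nonneg_left upper (pow_nonneg ha.1 (m + 1))
  have k2 := mul_le_mul_of_nonneg_left lower (sub_nonneg.2 hpow)
  rw [← hsplit]
  linear_combination k1 + k2

lemma radialMean_nonneg (hh : ∀ t ∈ Icc (0:ℝ) 1, 0 ≤ h t) {s : ℝ} (hs : s ∈ Icc (0:ℝ) 1) :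
    0 ≤ radialMean m h s :=
  mul_nonneg (one_div_nonneg.2 (pow_nonneg hs.1 m)) (integral_pow_mul_nonneg hh hs)

lemma radialMean_le_mul_self (hh : ∀ t ∈ Icc (0:ℝ) 1, 0 ≤ h t)
    (hanti : AntitoneOn h (Icc 0 1)) {s : ℝ} (hs : s ∈ Icc (0:ℝ) 1) :
    radialMean m h s ≤ h 0 * s := by
  have h0 : (0:ℝ) ∈ Icc (0:ℝ) 1 := ⟨le_rfl, zero_le_one⟩
  rcases hs.1.eq_or_lt with rfl | hs0
  · simp [radialMean]
  have hint : ∫ τ in (0:ℝ)..s, τ ^ m * h τ ≤ ∫ τ in (0:ℝ)..s, s ^ m * h 0 :=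
    integral_mono_on hs.1 (intervalIntegrable_pow_mul_of_antitoneOn hanti h0 hs)
      intervalIntegrable_const fun τ hτ =>
        mul_le_mul (pow_le_pow_left₀ hτ.1 hτ.2 m) (hanti h0 ⟨hτ.1, hτ.2.trans hs.2⟩ hτ.1)
          (hh τ ⟨hτ.1, hτ.2.trans hs.2⟩) (pow_nonneg hs.1 m)
  calc radialMean m h s ≤ (1 / s ^ m) * ∫ τ in (0:ℝ)..s, s ^ m * h 0 :=
        mul_le_mul_of_nonneg_left hint (by positivity)
    _ = h 0 * s := by
        rw [intervalIntegral.integral_const, smul_eq_mul, sub_zero]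
        field_simp

lemma continuousOn_radialMean (hcont : ContinuousOn h (Icc 0 1))
    (hh : ∀ t ∈ Icc (0:ℝ) 1, 0 ≤ h t) (hanti : AntitoneOn h (Icc 0 1)) :
    ContinuousOn (radialMean m h) (Icc 0 1) := by
  intro s hs
  rcases hs.1.eq_or_lt with rfl | hs0
  · have hlim : Filter.Tendsto (fun s => h 0 * s) (nhdsWithin 0 (Icc 0 1)) (nhds 0) := by
      simpa using ((continuous_const_mul (h 0)).tendsto 0).mono_left nhdsWithin_le_nhds
    have hzero : radialMean m h 0 = 0 := by simp [radialMean]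
    rw [ContinuousWithinAt, hzero]
    exact tendsto_of_tendsto_of_tendsto_of_le_of_le' tendsto_const_nhds hlim
      (eventually_nhdsWithin_of_forall fun s hs => radialMean_nonneg hh hs)
      (eventually_nhdsWithin_of_forall fun s hs => radialMean_le_mul_self hh hanti hs)
  · have hprim : ContinuousOn (fun s => ∫ τ in (0:ℝ)..s, τ ^ m * h τ) (Icc 0 1) := by
      simpa using continuousOn_primitive_interval (μ := volume) (a := 0) (b := 1)
        (((continuous_pow m).continuousOn.mul hcont).integrableOn_Icc.mono_set
          (by simp))
    exact ((continuousAt_const.div (continuous_pow m).continuousAt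
      (pow_ne_zero m hs0.ne')).continuousWithinAt).mul (hprim s hs)

lemma radialMean_le_rpow_neg_mul (hh : ∀ t ∈ Icc (0:ℝ) 1, 0 ≤ h t)
    (hanti : AntitoneOn h (Icc 0 1)) {s : ℝ} (hs : s ∈ Ioc (0:ℝ) 1) :
    radialMean m h s ≤ s ^ (-(m:ℝ)) * ∫ τ in (0:ℝ)..1, τ ^ m * h τ := by
  rw [radialMean, Real.rpow_neg hs.1.le, Real.rpow_natCast, ← one_div]
  exact mul_le_mul_of_nonneg_left (integral_pow_mul_mono hh hanti hs.1.le hs.2 le_rfl)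
    (one_div_nonneg.2 (pow_nonneg hs.1.le m))

lemma pow_succ_mul_integral_le_radialMean (hh : ∀ t ∈ Icc (0:ℝ) 1, 0 ≤ h t)
    (hanti : AntitoneOn h (Icc 0 1)) {a s : ℝ} (ha : 0 ≤ a) (hs : s ∈ Icc a 1) :
    a ^ (m + 1) * ∫ τ in (0:ℝ)..1, τ ^ m * h τ ≤ radialMean m h s := by
  have hs0 : 0 ≤ s := ha.trans hs.1
  rcases hs0.eq_or_lt with rfl | hs0
  · have ha0 : a = 0 := le_antisymm hs.1 ha
    simp [ha0, radialMean]
  have hweight : 1 ≤ 1 / s ^ m := one_le_one_div (by positivity) (pow_le_one₀ hs0.le hs.2)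
  calc a ^ (m + 1) * ∫ τ in (0:ℝ)..1, τ ^ m * h τ
      ≤ ∫ τ in (0:ℝ)..a, τ ^ m * h τ :=
        pow_succ_mul_integral_le_integral hanti ⟨ha, hs.1.trans hs.2⟩
    _ ≤ ∫ τ in (0:ℝ)..s, τ ^ m * h τ := integral_pow_mul_mono hh hanti ha hs.1 hs.2
    _ ≤ radialMean m h s :=
        le_mul_of_one_le_left (integral_pow_mul_nonneg hh ⟨hs0.le, hs.2⟩) hweight

end RadialMean

lemma integral_le_div_of_le_rpow {g : ℝ → ℝ} {e K : ℝ} (he : -1 < e)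
    (hg : IntervalIntegrable g volume 0 1) (hle : ∀ s ∈ Ioo (0:ℝ) 1, g s ≤ K * s ^ e) :
    ∫ s in (0:ℝ)..1, g s ≤ K / (e + 1) := by
  calc ∫ s in (0:ℝ)..1, g s ≤ ∫ s in (0:ℝ)..1, K * s ^ e :=
        integral_mono_on_of_le_Ioo zero_le_one hg
          ((intervalIntegral.intervalIntegrable_rpow' he).const_mul K) hle
    _ = K / (e + 1) := by
        rw [intervalIntegral.integral_const_mul, integral_rpow (Or.inl he), Real.one_rpow,
          Real.zero_rpow (by linarith), sub_zero, mul_one_div]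

lemma sSup_abs_image_Icc_of_antitoneOn {v : ℝ → ℝ} {x y : ℝ} (hxy : x ≤ y)
    (hv : ∀ r ∈ Icc x y, 0 ≤ v r) (hanti : AntitoneOn v (Icc x y)) :
    sSup ((fun s => |v s|) '' Icc x y) = v x := by
  have hx : x ∈ Icc x y := left_mem_Icc.2 hxy
  refine IsGreatest.csSup_eq ⟨⟨x, hx, abs_of_nonneg (hv x hx)⟩, ?_⟩
  rintro _ ⟨s, hs, rfl⟩
  exact (abs_of_nonneg (hv s hs)).trans_le (hanti hx hs hs.1)

lemma integral_left_mem_harnackCone {g : ℝ → ℝ} {a b c : ℝ}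
    (hg : ContinuousOn g (Icc 0 1)) (hg0 : ∀ s ∈ Icc (0:ℝ) 1, 0 ≤ g s)
    (ha : 0 ≤ a) (hb : b ≤ 1) (hc : c * ∫ s in (0:ℝ)..1, g s ≤ ∫ s in b..1, g s) :
    (fun r => ∫ s in r..1, g s) ∈ harnackCone a b c := by
  have h01 : (0:ℝ) ∈ Icc (0:ℝ) 1 := ⟨le_rfl, zero_le_one⟩
  have hnonneg : ∀ r ∈ Icc (0:ℝ) 1, 0 ≤ ∫ s in r..1, g s := fun r hr =>
    integral_nonneg hr.2 fun s hs => hg0 s ⟨hr.1.trans hs.1, hs.2⟩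
  have hanti : AntitoneOn (fun r => ∫ s in r..1, g s) (Icc 0 1) := fun r₁ hr₁ r₂ hr₂ hr =>
    integral_mono_interval hr hr₂.2 le_rfl
      (ae_restrict_of_forall_mem measurableSet_Ioc fun s hs =>
        hg0 s ⟨hr₁.1.trans hs.1.le, hs.2⟩)
      ((hg.mono (Icc_subset_Icc hr₁.1 le_rfl)).intervalIntegrable_of_Icc hr₁.2)
  refine ⟨?_, hnonneg, hanti, fun r hr => ?_⟩
  · simpa using continuousOn_primitive_interval_left (μ := volume) (a := 0) (b := 1)
      (hg.integrableOn_Icc.mono_set (by simp))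
  · have hb' : b ∈ Icc (0:ℝ) 1 := ⟨ha.trans (hr.1.trans hr.2), hb⟩
    rw [sSup_abs_image_Icc_of_antitoneOn zero_le_one hnonneg hanti]
    exact hc.trans (hanti ⟨ha.trans hr.1, hr.2.trans hb⟩ hb' hr.2)

section PLaplacian

variable {m : ℕ} {h : ℝ → ℝ} {p : ℝ}

lemma continuousOn_pLapInv_radialMean (hp : 1 < p) (hcont : ContinuousOn h (Icc 0 1))
    (hh : ∀ t ∈ Icc (0:ℝ) 1, 0 ≤ h t) (hanti : AntitoneOn h (Icc 0 1)) :
    ContinuousOn (fun s => pLapInv p (radialMean m h s)) (Icc 0 1) :=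
  ((continuousOn_radialMean hcont hh hanti).rpow_const fun _ _ =>
    Or.inr (one_div_nonneg.2 (sub_nonneg.2 hp.le))).congr fun _ hs =>
      pLapInv_of_nonneg hp (radialMean_nonneg hh hs)

lemma integral_pLapInv_radialMean_le (hp : (m:ℝ) + 1 < p) (hcont : ContinuousOn h (Icc 0 1))
    (hh : ∀ t ∈ Icc (0:ℝ) 1, 0 ≤ h t) (hanti : AntitoneOn h (Icc 0 1)) :
    ∫ s in (0:ℝ)..1, pLapInv p (radialMean m h s) ≤
      (p - 1) / (p - (m + 1)) * (∫ τ in (0:ℝ)..1, τ ^ m * h τ) ^ (1 / (p - 1)) := by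
  have hp1 : 0 < p - 1 := by linarith [m.cast_nonneg (α := ℝ)]
  have he : -1 < -(m:ℝ) * (1 / (p - 1)) := by
    rw [neg_mul, neg_lt_neg_iff, ← div_eq_mul_one_div, div_lt_one hp1]
    linarith
  set M := ∫ τ in (0:ℝ)..1, τ ^ m * h τ
  have hM : 0 ≤ M := integral_pow_mul_nonneg hh ⟨zero_le_one, le_rfl⟩
  have hint : IntervalIntegrable (fun s => pLapInv p (radialMean m h s)) volume 0 1 :=
    (continuousOn_pLapInv_radialMean (by linarith) hcont hh hanti).intervalIntegrable_of_Icc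
      zero_le_one
  refine (integral_le_div_of_le_rpow (K := M ^ (1 / (p - 1))) he hint fun s hs => ?_).trans_eq ?_
  · have hs' : s ∈ Icc (0:ℝ) 1 := Ioo_subset_Icc_self hs
    rw [pLapInv_of_nonneg (by linarith) (radialMean_nonneg hh hs'), Real.rpow_mul hs.1.le,
      mul_comm _ (_ ^ _), ← Real.mul_rpow (Real.rpow_nonneg hs.1.le _) hM]
    exact Real.rpow_le_rpow (radialMean_nonneg hh hs')
      (radialMean_le_rpow_neg_mul hh hanti (Ioo_subset_Ioc_self hs)) (by positivity)
  · field_simp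
    ring

lemma rpow_le_integral_pLapInv_radialMean (hp : 1 < p) (hcont : ContinuousOn h (Icc 0 1))
    (hh : ∀ t ∈ Icc (0:ℝ) 1, 0 ≤ h t) (hanti : AntitoneOn h (Icc 0 1)) {a b : ℝ} (ha : 0 ≤ a)
    (hab : a ≤ b) (hb : b ≤ 1) :
    (1 - b) * (a ^ (m + 1) * ∫ τ in (0:ℝ)..1, τ ^ m * h τ) ^ (1 / (p - 1)) ≤
      ∫ s in b..1, pLapInv p (radialMean m h s) := by
  have hM := integral_pow_mul_nonneg (m := m) hh ⟨zero_le_one, le_rfl⟩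
  have hint := integral_mono_on (μ := volume) hb intervalIntegrable_const
    (((continuousOn_pLapInv_radialMean hp hcont hh hanti).mono
      (Icc_subset_Icc (ha.trans hab) le_rfl)).intervalIntegrable_of_Icc hb) fun s hs => by
        have hs' : s ∈ Icc a 1 := ⟨hab.trans hs.1, hs.2⟩
        rw [pLapInv_of_nonneg hp (radialMean_nonneg hh ⟨ha.trans hs'.1, hs'.2⟩)]
        exact Real.rpow_le_rpow (mul_nonneg (pow_nonneg ha _) hM)
          (pow_succ_mul_integral_le_radialMean hh hanti ha hs') (by simp [hp.le])
  rwa [intervalIntegral.integral_const, smul_eq_mul] at hint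

lemma integral_pLapInv_radialMean_mem_harnackCone (hp : (m:ℝ) + 1 < p)
    (hcont : ContinuousOn h (Icc 0 1)) (hh : ∀ t ∈ Icc (0:ℝ) 1, 0 ≤ h t)
    (hanti : AntitoneOn h (Icc 0 1)) {a b : ℝ} (ha : 0 ≤ a) (hab : a ≤ b) (hb : b ≤ 1) :
    (fun r => ∫ s in r..1, pLapInv p (radialMean m h s)) ∈
      harnackCone a b ((p - (m + 1)) / (p - 1) * (1 - b) * a ^ (((m:ℝ) + 1) / (p - 1))) := by
  have hp1 : 1 < p := by linarith [m.cast_nonneg (α := ℝ)]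
  set M := ∫ τ in (0:ℝ)..1, τ ^ m * h τ
  have hM : 0 ≤ M := integral_pow_mul_nonneg hh ⟨zero_le_one, le_rfl⟩
  have hc : 0 ≤ (p - (m + 1)) / (p - 1) * (1 - b) * a ^ (((m:ℝ) + 1) / (p - 1)) := by
    have : 0 ≤ (p - (m + 1)) / (p - 1) := div_nonneg (by linarith) (by linarith)
    have : 0 ≤ 1 - b := by linarith
    positivity
  refine integral_left_mem_harnackCone (continuousOn_pLapInv_radialMean hp1 hcont hh hanti)
    (fun s hs => ?_) ha hb ?_
  · rw [pLapInv_of_nonneg hp1 (radialMean_nonneg hh hs)]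
    exact Real.rpow_nonneg (radialMean_nonneg hh hs) _
  calc _ ≤ (p - (m + 1)) / (p - 1) * (1 - b) * a ^ (((m:ℝ) + 1) / (p - 1)) *
        ((p - 1) / (p - (m + 1)) * M ^ (1 / (p - 1))) :=
        mul_le_mul_of_nonneg_left (integral_pLapInv_radialMean_le hp hcont hh hanti) hc
    _ = (1 - b) * (a ^ (m + 1) * M) ^ (1 / (p - 1)) := by
        rw [Real.mul_rpow (pow_nonneg ha _) hM, ← Real.rpow_natCast, ← Real.rpow_mul ha]
        have : p - (m + 1) ≠ 0 := by linarith
        have : p - 1 ≠ 0 := by linarith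
        field_simp
        push_cast
        ring_nf
    _ ≤ _ := rpow_le_integral_pLapInv_radialMean hp1 hcont hh hanti ha hab hb

end PLaplacian

lemma radialT_mem_harnackCone {n : ℕ} (hn : 1 ≤ n) {p : ℝ} (hp : (n : ℝ) < p) {a b : ℝ}
    (ha : 0 ≤ a) (hab : a ≤ b) (hb : b ≤ 1) {f : ℝ → ℝ → ℝ}
    (hf_cont : ContinuousOn (fun q : ℝ × ℝ => f q.1 q.2) (Ici 0 ×ˢ Ici 0))
    (hf_nonneg : ∀ x y : ℝ, 0 ≤ x → 0 ≤ y → 0 ≤ f x y)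
    (hf_mono : ∀ x₁ y₁ x₂ y₂ : ℝ, 0 ≤ x₁ → x₁ ≤ x₂ → 0 ≤ y₁ → y₁ ≤ y₂ → f x₁ y₁ ≤ f x₂ y₂)
    {u₁ u₂ : ℝ → ℝ} (hu₁_cont : ContinuousOn u₁ (Icc 0 1))
    (hu₁_nonneg : ∀ t ∈ Icc (0:ℝ) 1, 0 ≤ u₁ t) (hu₁_anti : AntitoneOn u₁ (Icc 0 1))
    (hu₂_cont : ContinuousOn u₂ (Icc 0 1))
    (hu₂_nonneg : ∀ t ∈ Icc (0:ℝ) 1, 0 ≤ u₂ t) (hu₂_anti : AntitoneOn u₂ (Icc 0 1)) :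
    radialT n p f u₁ u₂ ∈
      harnackCone a b ((p - n) / (p - 1) * (1 - b) * a ^ ((n : ℝ) / (p - 1))) := by
  have hcont : ContinuousOn (fun τ => f (u₁ τ) (u₂ τ)) (Icc 0 1) :=
    hf_cont.comp (hu₁_cont.prodMk hu₂_cont) fun t ht => ⟨hu₁_nonneg t ht, hu₂_nonneg t ht⟩
  have hh : ∀ t ∈ Icc (0:ℝ) 1, 0 ≤ f (u₁ t) (u₂ t) := fun t ht =>
    hf_nonneg _ _ (hu₁_nonneg t ht) (hu₂_nonneg t ht)
  have hanti : AntitoneOn (fun τ => f (u₁ τ) (u₂ τ)) (Icc 0 1) := fun s hs t ht hst =>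
    hf_mono _ _ _ _ (hu₁_nonneg t ht) (hu₁_anti hs ht hst) (hu₂_nonneg t ht) (hu₂_anti hs ht hst)
  obtain ⟨m, rfl⟩ : ∃ m, n = m + 1 := ⟨n - 1, by omega⟩
  push_cast at hp ⊢
  exact integral_pLapInv_radialMean_mem_harnackCone hp hcont hh hanti ha hab hb

theorem stmt_15_general (n : ℕ) (hn : 2 ≤ n) (p₁ p₂ : ℝ)
    (hp₁ : (n : ℝ) < p₁) (hp₂ : (n : ℝ) < p₂)
    (a b : ℝ) (ha : 0 < a) (hab : a ≤ b) (hb : b < 1)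
    (c₁ c₂ : ℝ)
    (hc₁ : c₁ = (p₁ - n) / (p₁ - 1) * (1 - b) * a ^ ((n : ℝ) / (p₁ - 1)))
    (hc₂ : c₂ = (p₂ - n) / (p₂ - 1) * (1 - b) * a ^ ((n : ℝ) / (p₂ - 1)))
    (f₁ f₂ : ℝ → ℝ → ℝ)
    (hf₁_cont : ContinuousOn (fun q : ℝ × ℝ => f₁ q.1 q.2) (Ici 0 ×ˢ Ici 0))
    (hf₂_cont : ContinuousOn (fun q : ℝ × ℝ => f₂ q.1 q.2) (Ici 0 ×ˢ Ici 0))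
    (hf₁_nonneg : ∀ x y : ℝ, 0 ≤ x → 0 ≤ y → 0 ≤ f₁ x y)
    (hf₂_nonneg : ∀ x y : ℝ, 0 ≤ x → 0 ≤ y → 0 ≤ f₂ x y)
    (hf₁_mono : ∀ x₁ y₁ x₂ y₂ : ℝ, 0 ≤ x₁ → x₁ ≤ x₂ → 0 ≤ y₁ → y₁ ≤ y₂ →
      f₁ x₁ y₁ ≤ f₁ x₂ y₂)
    (hf₂_mono : ∀ x₁ y₁ x₂ y₂ : ℝ, 0 ≤ x₁ → x₁ ≤ x₂ → 0 ≤ y₁ → y₁ ≤ y₂ →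
      f₂ x₁ y₁ ≤ f₂ x₂ y₂)
    (u₁ u₂ : ℝ → ℝ)
    (hu₁_cont : ContinuousOn u₁ (Icc 0 1))
    (hu₁_nonneg : ∀ t ∈ Icc (0:ℝ) 1, 0 ≤ u₁ t)
    (hu₁_anti : AntitoneOn u₁ (Icc 0 1))
    (hu₂_cont : ContinuousOn u₂ (Icc 0 1))
    (hu₂_nonneg : ∀ t ∈ Icc (0:ℝ) 1, 0 ≤ u₂ t)
    (hu₂_anti : AntitoneOn u₂ (Icc 0 1)) :
    (ContinuousOn (radialT n p₁ f₁ u₁ u₂) (Icc 0 1) ∧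
     (∀ r ∈ Icc (0:ℝ) 1, 0 ≤ radialT n p₁ f₁ u₁ u₂ r) ∧
     AntitoneOn (radialT n p₁ f₁ u₁ u₂) (Icc 0 1) ∧
     (∀ r ∈ Icc a b,
       c₁ * sSup ((fun s => |radialT n p₁ f₁ u₁ u₂ s|) '' Icc (0:ℝ) 1) ≤
         radialT n p₁ f₁ u₁ u₂ r)) ∧
    (ContinuousOn (radialT n p₂ f₂ u₁ u₂) (Icc 0 1) ∧
     (∀ r ∈ Icc (0:ℝ) 1, 0 ≤ radialT n p₂ f₂ u₁ u₂ r) ∧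
     AntitoneOn (radialT n p₂ f₂ u₁ u₂) (Icc 0 1) ∧
     (∀ r ∈ Icc a b,
       c₂ * sSup ((fun s => |radialT n p₂ f₂ u₁ u₂ s|) '' Icc (0:ℝ) 1) ≤
         radialT n p₂ f₂ u₁ u₂ r)) := by
  subst hc₁ hc₂
  have hn' : 1 ≤ n := by omega
  exact ⟨radialT_mem_harnackCone hn' hp₁ ha.le hab hb.le hf₁_cont hf₁_nonneg hf₁_mono
      hu₁_cont hu₁_nonneg hu₁_anti hu₂_cont hu₂_nonneg hu₂_anti,
    radialT_mem_harnackCone hn' hp₂ ha.le hab hb.le hf₂_cont hf₂_nonneg hf₂_mono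
      hu₁_cont hu₁_nonneg hu₁_anti hu₂_cont hu₂_nonneg hu₂_anti⟩

/-- **The operator `T = (T₁,T₂)` maps the cone `K = K₁ × K₂` into itself.**
Here `Kᵢ` consists of the nonnegative, nonincreasing continuous functions `v` on
`[0,1]` with `min_{[a,b]} v ≥ cᵢ ‖v‖_∞`, `cᵢ = ((pᵢ-n)/(pᵢ-1))(1-b)a^{n/(pᵢ-1)}`,
and `f₁, f₂ : ℝ₊² → ℝ₊` are continuous and nondecreasing. -/
theorem stmt_15 (n : ℕ) (hn : 2 ≤ n) (p₁ p₂ : ℝ)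
    (hp₁ : (n : ℝ) < p₁) (hp₂ : (n : ℝ) < p₂)
    (a b : ℝ) (ha : 0 < a) (hab : a ≤ b) (hb : b < 1)
    (c₁ c₂ : ℝ)
    (hc₁ : c₁ = (p₁ - n) / (p₁ - 1) * (1 - b) * a ^ ((n : ℝ) / (p₁ - 1)))
    (hc₂ : c₂ = (p₂ - n) / (p₂ - 1) * (1 - b) * a ^ ((n : ℝ) / (p₂ - 1)))
    (f₁ f₂ : ℝ → ℝ → ℝ)
    (hf₁_cont : ContinuousOn (fun q : ℝ × ℝ => f₁ q.1 q.2) (Ici 0 ×ˢ Ici 0))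
    (hf₂_cont : ContinuousOn (fun q : ℝ × ℝ => f₂ q.1 q.2) (Ici 0 ×ˢ Ici 0))
    (hf₁_nonneg : ∀ x y : ℝ, 0 ≤ x → 0 ≤ y → 0 ≤ f₁ x y)
    (hf₂_nonneg : ∀ x y : ℝ, 0 ≤ x → 0 ≤ y → 0 ≤ f₂ x y)
    (hf₁_mono : ∀ x₁ y₁ x₂ y₂ : ℝ, 0 ≤ x₁ → x₁ ≤ x₂ → 0 ≤ y₁ → y₁ ≤ y₂ →
      f₁ x₁ y₁ ≤ f₁ x₂ y₂)
    (hf₂_mono : ∀ x₁ y₁ x₂ y₂ : ℝ, 0 ≤ x₁ → x₁ ≤ x₂ → 0 ≤ y₁ → y₁ ≤ y₂ →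
      f₂ x₁ y₁ ≤ f₂ x₂ y₂)
    (u₁ u₂ : ℝ → ℝ)
    (hu₁_cont : ContinuousOn u₁ (Icc 0 1))
    (hu₁_nonneg : ∀ t ∈ Icc (0:ℝ) 1, 0 ≤ u₁ t)
    (hu₁_anti : AntitoneOn u₁ (Icc 0 1))
    (hu₁_min : ∀ t ∈ Icc a b, c₁ * sSup ((fun s => |u₁ s|) '' Icc (0:ℝ) 1) ≤ u₁ t)
    (hu₂_cont : ContinuousOn u₂ (Icc 0 1))
    (hu₂_nonneg : ∀ t ∈ Icc (0:ℝ) 1, 0 ≤ u₂ t)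
    (hu₂_anti : AntitoneOn u₂ (Icc 0 1))
    (hu₂_min : ∀ t ∈ Icc a b, c₂ * sSup ((fun s => |u₂ s|) '' Icc (0:ℝ) 1) ≤ u₂ t) :
    (ContinuousOn (radialT n p₁ f₁ u₁ u₂) (Icc 0 1) ∧
     (∀ r ∈ Icc (0:ℝ) 1, 0 ≤ radialT n p₁ f₁ u₁ u₂ r) ∧
     AntitoneOn (radialT n p₁ f₁ u₁ u₂) (Icc 0 1) ∧
     (∀ r ∈ Icc a b,
       c₁ * sSup ((fun s => |radialT n p₁ f₁ u₁ u₂ s|) '' Icc (0:ℝ) 1) ≤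
         radialT n p₁ f₁ u₁ u₂ r)) ∧
    (ContinuousOn (radialT n p₂ f₂ u₁ u₂) (Icc 0 1) ∧
     (∀ r ∈ Icc (0:ℝ) 1, 0 ≤ radialT n p₂ f₂ u₁ u₂ r) ∧
     AntitoneOn (radialT n p₂ f₂ u₁ u₂) (Icc 0 1) ∧
     (∀ r ∈ Icc a b,
       c₂ * sSup ((fun s => |radialT n p₂ f₂ u₁ u₂ s|) '' Icc (0:ℝ) 1) ≤
         radialT n p₂ f₂ u₁ u₂ r)) :=
  stmt_15_general n hn p₁ p₂ hp₁ hp₂ a b ha hab hb c₁ c₂ hc₁ hc₂ f₁ f₂ hf₁_cont hf₂_cont hf₁_nonneg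
    hf₂_nonneg hf₁_mono hf₂_mono u₁ u₂ hu₁_cont hu₁_nonneg hu₁_anti hu₂_cont hu₂_nonneg hu₂_anti
end

section
/- Let n ≥ 2 be an integer, p₁, p₂ > n, [a,b] ⊂ (0,1), cᵢ := ((pᵢ−n)/(pᵢ−1))(1−b)a^{n/(pᵢ−1)} (i = 1,2), and let f₁, f₂ : ℝ₊² → ℝ₊ be continuous and nondecreasing. If for each i ∈ {1,2}, lim_{uᵢ→0⁺} fᵢ(u₁,u₂)/uᵢ^{pᵢ−1} = +∞ and lim_{uᵢ→∞} fᵢ(u₁,u₂)/uᵢ^{pᵢ−1} = 0, both uniformly with respect to the other variable u_j (j ≠ i) over ℝ₊, then there exist αᵢ, βᵢ > 0 with βᵢ/cᵢ < αᵢ (i = 1,2) such that fᵢ(β₁,β₂) > βᵢ^{pᵢ−1}/((b−a)a^{n−1}(1−b)^{pᵢ−1}) and fᵢ(α₁,α₂) < αᵢ^{pᵢ−1} for i = 1,2. -/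
open Set

/-- **Superlinearity at `0` and sublinearity at `∞` yield the compression
inequalities.** If, for `i = 1,2`, `fᵢ(u₁,u₂)/uᵢ^{pᵢ−1} → ∞` as `uᵢ → 0⁺` and
`fᵢ(u₁,u₂)/uᵢ^{pᵢ−1} → 0` as `uᵢ → ∞`, both uniformly in the other variable over
`ℝ₊`, then there exist `αᵢ, βᵢ > 0` with `βᵢ/cᵢ < αᵢ` such that
`fᵢ(β₁,β₂) > βᵢ^{pᵢ−1}/((b−a) a^{n−1} (1−b)^{pᵢ−1})` and
`fᵢ(α₁,α₂) < αᵢ^{pᵢ−1}` for `i = 1,2`. -/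
theorem stmt_19 (n : ℕ) (hn : 2 ≤ n) (p₁ p₂ : ℝ)
    (hp₁ : (n : ℝ) < p₁) (hp₂ : (n : ℝ) < p₂)
    (a b : ℝ) (ha : 0 < a) (hab : a < b) (hb : b < 1)
    (c₁ c₂ : ℝ)
    (hc₁ : c₁ = (p₁ - n) / (p₁ - 1) * (1 - b) * a ^ ((n : ℝ) / (p₁ - 1)))
    (hc₂ : c₂ = (p₂ - n) / (p₂ - 1) * (1 - b) * a ^ ((n : ℝ) / (p₂ - 1)))
    (f₁ f₂ : ℝ → ℝ → ℝ)
    (hf₁_cont : ContinuousOn (fun q : ℝ × ℝ => f₁ q.1 q.2) (Ici 0 ×ˢ Ici 0))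
    (hf₂_cont : ContinuousOn (fun q : ℝ × ℝ => f₂ q.1 q.2) (Ici 0 ×ˢ Ici 0))
    (hf₁_nonneg : ∀ x y : ℝ, 0 ≤ x → 0 ≤ y → 0 ≤ f₁ x y)
    (hf₂_nonneg : ∀ x y : ℝ, 0 ≤ x → 0 ≤ y → 0 ≤ f₂ x y)
    (hf₁_mono : ∀ x₁ y₁ x₂ y₂ : ℝ, 0 ≤ x₁ → x₁ ≤ x₂ → 0 ≤ y₁ → y₁ ≤ y₂ →
      f₁ x₁ y₁ ≤ f₁ x₂ y₂)
    (hf₂_mono : ∀ x₁ y₁ x₂ y₂ : ℝ, 0 ≤ x₁ → x₁ ≤ x₂ → 0 ≤ y₁ → y₁ ≤ y₂ →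
      f₂ x₁ y₁ ≤ f₂ x₂ y₂)
    -- f₁ superlinear at 0 and sublinear at ∞ w.r.t. φ_{p₁}, uniformly in u₂
    (hf₁_sup0 : ∀ M : ℝ, ∃ δ > (0:ℝ), ∀ x : ℝ, 0 < x → x < δ → ∀ y : ℝ, 0 ≤ y →
      M ≤ f₁ x y / x ^ (p₁ - 1))
    (hf₁_subinf : ∀ ε > (0:ℝ), ∃ N > (0:ℝ), ∀ x : ℝ, N ≤ x → ∀ y : ℝ, 0 ≤ y →
      f₁ x y / x ^ (p₁ - 1) ≤ ε)
    -- f₂ superlinear at 0 and sublinear at ∞ w.r.t. φ_{p₂}, uniformly in u₁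
    (hf₂_sup0 : ∀ M : ℝ, ∃ δ > (0:ℝ), ∀ y : ℝ, 0 < y → y < δ → ∀ x : ℝ, 0 ≤ x →
      M ≤ f₂ x y / y ^ (p₂ - 1))
    (hf₂_subinf : ∀ ε > (0:ℝ), ∃ N > (0:ℝ), ∀ y : ℝ, N ≤ y → ∀ x : ℝ, 0 ≤ x →
      f₂ x y / y ^ (p₂ - 1) ≤ ε) :
    ∃ α₁ α₂ β₁ β₂ : ℝ, 0 < α₁ ∧ 0 < α₂ ∧ 0 < β₁ ∧ 0 < β₂ ∧
      β₁ / c₁ < α₁ ∧ β₂ / c₂ < α₂ ∧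
      β₁ ^ (p₁ - 1) / ((b - a) * a ^ (n - 1) * (1 - b) ^ (p₁ - 1)) < f₁ β₁ β₂ ∧
      β₂ ^ (p₂ - 1) / ((b - a) * a ^ (n - 1) * (1 - b) ^ (p₂ - 1)) < f₂ β₁ β₂ ∧
      f₁ α₁ α₂ < α₁ ^ (p₁ - 1) ∧ f₂ α₁ α₂ < α₂ ^ (p₂ - 1) := by
  have hn1 : (1:ℝ) < (n:ℝ) := by exact_mod_cast lt_of_lt_of_le one_lt_two hn
  have hb1 : 0 < 1 - b := by linarith
  have hba : 0 < b - a := by linarith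
  set D₁ : ℝ := (b - a) * a ^ (n - 1) * (1 - b) ^ (p₁ - 1) with hD₁def
  set D₂ : ℝ := (b - a) * a ^ (n - 1) * (1 - b) ^ (p₂ - 1) with hD₂def
  have hD₁ : 0 < D₁ :=
    mul_pos (mul_pos hba (pow_pos ha _)) (Real.rpow_pos_of_pos hb1 _)
  have hD₂ : 0 < D₂ :=
    mul_pos (mul_pos hba (pow_pos ha _)) (Real.rpow_pos_of_pos hb1 _)
  have hc₁pos : 0 < c₁ := by
    rw [hc₁]
    exact mul_pos (mul_pos (div_pos (by linarith) (by linarith)) hb1)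
      (Real.rpow_pos_of_pos ha _)
  have hc₂pos : 0 < c₂ := by
    rw [hc₂]
    exact mul_pos (mul_pos (div_pos (by linarith) (by linarith)) hb1)
      (Real.rpow_pos_of_pos ha _)
  obtain ⟨δ₁, hδ₁, h1⟩ := hf₁_sup0 (2 / D₁)
  obtain ⟨δ₂, hδ₂, h2⟩ := hf₂_sup0 (2 / D₂)
  set β : ℝ := min δ₁ δ₂ / 2 with hβdef
  have hβpos : 0 < β := half_pos (lt_min hδ₁ hδ₂)
  have hβ1 : β < δ₁ :=
    lt_of_lt_of_le (half_lt_self (lt_min hδ₁ hδ₂)) (min_le_left _ _)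
  have hβ2 : β < δ₂ :=
    lt_of_lt_of_le (half_lt_self (lt_min hδ₁ hδ₂)) (min_le_right _ _)
  have hβp1 : 0 < β ^ (p₁ - 1) := Real.rpow_pos_of_pos hβpos _
  have hβp2 : 0 < β ^ (p₂ - 1) := Real.rpow_pos_of_pos hβpos _
  have Hb1 : 2 / D₁ * β ^ (p₁ - 1) ≤ f₁ β β :=
    (le_div_iff₀ hβp1).mp (h1 β hβpos hβ1 β hβpos.le)
  have Hb2 : 2 / D₂ * β ^ (p₂ - 1) ≤ f₂ β β :=
    (le_div_iff₀ hβp2).mp (h2 β hβpos hβ2 β hβpos.le)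
  have key1 : β ^ (p₁ - 1) / D₁ < f₁ β β := by
    have e : 2 / D₁ * β ^ (p₁ - 1) = 2 * (β ^ (p₁ - 1) / D₁) := by ring
    have hp : 0 < β ^ (p₁ - 1) / D₁ := div_pos hβp1 hD₁
    linarith [e ▸ Hb1]
  have key2 : β ^ (p₂ - 1) / D₂ < f₂ β β := by
    have e : 2 / D₂ * β ^ (p₂ - 1) = 2 * (β ^ (p₂ - 1) / D₂) := by ring
    have hp : 0 < β ^ (p₂ - 1) / D₂ := div_pos hβp2 hD₂
    linarith [e ▸ Hb2]
  obtain ⟨N₁, hN₁, g1⟩ := hf₁_subinf (1/2) (by norm_num)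
  obtain ⟨N₂, hN₂, g2⟩ := hf₂_subinf (1/2) (by norm_num)
  set α : ℝ := max (max N₁ N₂) (max (β / c₁ + 1) (β / c₂ + 1)) with hαdef
  have hαpos : 0 < α := lt_of_lt_of_le hN₁ (le_max_of_le_left (le_max_left _ _))
  have hαN₁ : N₁ ≤ α := le_max_of_le_left (le_max_left _ _)
  have hαN₂ : N₂ ≤ α := le_max_of_le_left (le_max_right _ _)
  have hαβ₁ : β / c₁ + 1 ≤ α := le_max_of_le_right (le_max_left _ _)
  have hαβ₂ : β / c₂ + 1 ≤ α := le_max_of_le_right (le_max_right _ _)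
  have hαp1 : 0 < α ^ (p₁ - 1) := Real.rpow_pos_of_pos hαpos _
  have hαp2 : 0 < α ^ (p₂ - 1) := Real.rpow_pos_of_pos hαpos _
  have Ga1 : f₁ α α ≤ 1/2 * α ^ (p₁ - 1) := by
    have := g1 α hαN₁ α hαpos.le
    calc f₁ α α = f₁ α α / α ^ (p₁ - 1) * α ^ (p₁ - 1) :=
          (div_mul_cancel₀ _ hαp1.ne').symm
      _ ≤ 1/2 * α ^ (p₁ - 1) := mul_le_mul_of_nonneg_right this hαp1.le
  have Ga2 : f₂ α α ≤ 1/2 * α ^ (p₂ - 1) := by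
    have := g2 α hαN₂ α hαpos.le
    calc f₂ α α = f₂ α α / α ^ (p₂ - 1) * α ^ (p₂ - 1) :=
          (div_mul_cancel₀ _ hαp2.ne').symm
      _ ≤ 1/2 * α ^ (p₂ - 1) := mul_le_mul_of_nonneg_right this hαp2.le
  exact ⟨α, α, β, β, hαpos, hαpos, hβpos, hβpos,
    by linarith, by linarith, key1, key2,
    by linarith, by linarith⟩
end
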